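/- Under the list-experiment model with misreporting (Assumptions 1 and 2), if there is no misreporting in the treatment group (p₁ = 0), then the bias of the mean-difference estimator is (E(Y₁) − E(Y₀)) − δ = (p₀/(1−p₀))·(E(Y₀) − J/2), where E(Y₀) = ∑_{j=0}^{J} j·P₀(j) and E(Y₁) = ∑_{j=0}^{J+1} j·P₁(j). In particular, the mean difference equals δ if and only if p₀ = 0 or E(Y₀) = J/2. -/

import Mathlib

/-!
Mixing with the uniform distribution on `{0, …, J}` pulls the control mean towards `J / 2`:
`E(Y₀) = (1 - p₀) μ + p₀ J / 2`, where `μ` is the latent mean. Without misreporting, the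
treatment response is the latent count plus an independent `Bernoulli(δ)` item, so
`E(Y₁) = μ + δ`. Eliminating `μ` gives the bias `p₀ (μ - J / 2) = p₀ / (1 - p₀) (E(Y₀) - J / 2)`.
-/

open Finset

lemma sum_Icc_zero_intCast (n : ℕ) : ∑ j ∈ Icc (0 : ℤ) n, (j : ℝ) = n * (n + 1) / 2 := by
  induction n with
  | zero => simp
  | succ n ih =>
    rw [Nat.cast_succ, ← insert_Icc_right_eq_Icc_add_one (by positivity), sum_insert (by simp), ih]
    push_cast
    ring

lemma sum_Icc_add_one_of_eq_zero {M : Type*} [AddCommMonoid M] (a b : ℤ) {f : ℤ → M}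
    (hf : f (b + 1) = 0) : ∑ j ∈ Icc a (b + 1), f j = ∑ j ∈ Icc a b, f j := by
  refine (sum_subset (Icc_subset_Icc_right (by omega)) fun j hj hj' => ?_).symm
  simp only [mem_Icc, not_and_or, not_le] at hj hj'
  obtain rfl : j = b + 1 := by omega
  exact hf

lemma sum_Icc_zero_mul_comp_sub_one {R : Type*} [CommRing R] (n : ℤ) (P : ℤ → R) :
    ∑ j ∈ Icc (0 : ℤ) (n + 1), (j : R) * P (j - 1) = ∑ j ∈ Icc (0 : ℤ) n, ((j : R) + 1) * P j := by
  have hshift : ∑ j ∈ Icc (0 : ℤ) (n + 1), (j : R) * P (j - 1)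
      = ∑ j ∈ Icc (-1 : ℤ) n, ((j : R) + 1) * P j := by
    rw [← neg_add_cancel (1 : ℤ), ← map_add_right_Icc, sum_map]
    simp
  rw [hshift]
  refine (sum_subset (Icc_subset_Icc_left (by norm_num)) fun j hj hj' => ?_).symm
  simp only [mem_Icc, not_and_or, not_le] at hj hj'
  -- the extra term at `j = -1` carries the factor `j + 1 = 0`
  obtain rfl : j = -1 := by omega
  simp

lemma sum_Icc_mul_uniform_mixture (J : ℕ) (p : ℝ) (P : ℤ → ℝ) :
    ∑ j ∈ Icc (0 : ℤ) J, (j : ℝ) * ((1 - p) * P j + p / (J + 1))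
      = (1 - p) * ∑ j ∈ Icc (0 : ℤ) J, (j : ℝ) * P j + p * J / 2 := by
  simp only [mul_add, sum_add_distrib, mul_left_comm _ (1 - p), ← mul_sum, ← sum_mul,
    sum_Icc_zero_intCast]
  field_simp

lemma sum_Icc_mul_shift_mixture (n : ℤ) (δ : ℝ) (P : ℤ → ℝ) (hP : P (n + 1) = 0) :
    ∑ j ∈ Icc (0 : ℤ) (n + 1), (j : ℝ) * (δ * P (j - 1) + (1 - δ) * P j)
      = ∑ j ∈ Icc (0 : ℤ) n, (j : ℝ) * P j + δ * ∑ j ∈ Icc (0 : ℤ) n, P j := by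
  simp only [mul_add, sum_add_distrib, mul_left_comm _ δ, mul_left_comm _ (1 - δ), ← mul_sum,
    sum_Icc_zero_mul_comp_sub_one, sum_Icc_add_one_of_eq_zero 0 n (f := fun j => (j : ℝ) * P j)
      (by simp [hP]), add_mul, one_mul]
  ring

theorem list_experiment_mean_difference_bias_no_treatment_misreporting_general
    (J : ℕ)
    (P : ℤ → ℝ)
    (hPzero : ∀ j : ℤ, j < 0 ∨ (J : ℤ) < j → P j = 0)
    (hPsum : ∑ j ∈ Finset.Icc (0 : ℤ) (J : ℤ), P j = 1)
    (δ p₀ p₁ : ℝ)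
    (hp₀ : 0 ≤ p₀ ∧ p₀ < 1)
    (hp₁zero : p₁ = 0)
    (P₀ P₁ : ℤ → ℝ)
    (hP₀ : ∀ j : ℤ, 0 ≤ j → j ≤ (J : ℤ) →
      P₀ j = (1 - p₀) * P j + p₀ / ((J : ℝ) + 1))
    (hP₁ : ∀ j : ℤ, 0 ≤ j → j ≤ (J : ℤ) + 1 →
      P₁ j = (1 - p₁) * (δ * P (j - 1) + (1 - δ) * P j) + p₁ / ((J : ℝ) + 2)) :
    ((∑ j ∈ Finset.Icc (0 : ℤ) ((J : ℤ) + 1), (j : ℝ) * P₁ j) -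
          (∑ j ∈ Finset.Icc (0 : ℤ) (J : ℤ), (j : ℝ) * P₀ j) - δ =
        p₀ / (1 - p₀) *
          ((∑ j ∈ Finset.Icc (0 : ℤ) (J : ℤ), (j : ℝ) * P₀ j) - (J : ℝ) / 2)) ∧
      ((∑ j ∈ Finset.Icc (0 : ℤ) ((J : ℤ) + 1), (j : ℝ) * P₁ j) -
            (∑ j ∈ Finset.Icc (0 : ℤ) (J : ℤ), (j : ℝ) * P₀ j) = δ ↔
        p₀ = 0 ∨ (∑ j ∈ Finset.Icc (0 : ℤ) (J : ℤ), (j : ℝ) * P₀ j) = (J : ℝ) / 2) := by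
  subst hp₁zero
  set μ := ∑ j ∈ Icc (0 : ℤ) J, (j : ℝ) * P j
  set E₀ := ∑ j ∈ Icc (0 : ℤ) J, (j : ℝ) * P₀ j
  set E₁ := ∑ j ∈ Icc (0 : ℤ) (J + 1), (j : ℝ) * P₁ j
  have hE₀ : E₀ = (1 - p₀) * μ + p₀ * J / 2 := by
    rw [← sum_Icc_mul_uniform_mixture]
    refine sum_congr rfl fun j hj => ?_
    rw [mem_Icc] at hj
    rw [hP₀ j hj.1 hj.2]
  have hE₁ : E₁ = μ + δ := by
    rw [← mul_one δ, ← hPsum, ← sum_Icc_mul_shift_mixture _ _ _ (hPzero _ (Or.inr (by omega)))]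
    refine sum_congr rfl fun j hj => ?_
    rw [mem_Icc] at hj
    rw [hP₁ j hj.1 hj.2]
    ring
  have hp₀ne : 1 - p₀ ≠ 0 := by linarith [hp₀.2]
  have hbias : E₁ - E₀ - δ = p₀ / (1 - p₀) * (E₀ - J / 2) := by
    rw [hE₀, hE₁]
    field_simp
    ring
  refine ⟨hbias, ?_⟩
  rw [← sub_eq_zero (a := E₁ - E₀), hbias, mul_eq_zero, div_eq_zero_iff, or_iff_left hp₀ne,
    sub_eq_zero]

/-- If there is no misreporting in the treatment group (`p₁ = 0`), the bias of the
mean-difference estimator is `(E(Y₁) − E(Y₀)) − δ = (p₀/(1−p₀))·(E(Y₀) − J/2)`;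
in particular, the mean difference equals `δ` iff `p₀ = 0` or `E(Y₀) = J/2`. -/
theorem list_experiment_mean_difference_bias_no_treatment_misreporting
    (J : ℕ) (hJ : 1 ≤ J)
    (P : ℤ → ℝ)
    (hPzero : ∀ j : ℤ, j < 0 ∨ (J : ℤ) < j → P j = 0)
    (hPnonneg : ∀ j : ℤ, 0 ≤ P j)
    (hPsum : ∑ j ∈ Finset.Icc (0 : ℤ) (J : ℤ), P j = 1)
    (δ p₀ p₁ : ℝ)
    (hδ : 0 ≤ δ ∧ δ ≤ 1) (hp₀ : 0 ≤ p₀ ∧ p₀ < 1) (hp₁ : 0 ≤ p₁ ∧ p₁ < 1)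
    (hp₁zero : p₁ = 0)
    (P₀ P₁ : ℤ → ℝ)
    (hP₀ : ∀ j : ℤ, 0 ≤ j → j ≤ (J : ℤ) →
      P₀ j = (1 - p₀) * P j + p₀ / ((J : ℝ) + 1))
    (hP₁ : ∀ j : ℤ, 0 ≤ j → j ≤ (J : ℤ) + 1 →
      P₁ j = (1 - p₁) * (δ * P (j - 1) + (1 - δ) * P j) + p₁ / ((J : ℝ) + 2)) :
    ((∑ j ∈ Finset.Icc (0 : ℤ) ((J : ℤ) + 1), (j : ℝ) * P₁ j) -
          (∑ j ∈ Finset.Icc (0 : ℤ) (J : ℤ), (j : ℝ) * P₀ j) - δ =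
        p₀ / (1 - p₀) *
          ((∑ j ∈ Finset.Icc (0 : ℤ) (J : ℤ), (j : ℝ) * P₀ j) - (J : ℝ) / 2)) ∧
      ((∑ j ∈ Finset.Icc (0 : ℤ) ((J : ℤ) + 1), (j : ℝ) * P₁ j) -
            (∑ j ∈ Finset.Icc (0 : ℤ) (J : ℤ), (j : ℝ) * P₀ j) = δ ↔
        p₀ = 0 ∨ (∑ j ∈ Finset.Icc (0 : ℤ) (J : ℤ), (j : ℝ) * P₀ j) = (J : ℝ) / 2) :=
  list_experiment_mean_difference_bias_no_treatment_misreporting_general J P hPzero hPsum δ p₀ p₁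
    hp₀ hp₁zero P₀ P₁ hP₀ hP₁
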